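/- For all N ≥ 2, all k with 1 ≤ k ≤ N/2 and all p ∈ (1/2,1), the eigenfunction f_{N,k} satisfies f_{N,k}(∧) − f_{N,k}(∨) ≥ (1/8)·λ^{(k−N)/2}·N·k, where ∧ and ∨ are the maximal and minimal height functions. Consequently max(f_{N,k}(∧), −f_{N,k}(∨)) ≥ (1/16)·λ^{(k−N)/2}·N·k. -/

import Mathlib

open Filter
open scoped Classical BigOperators Topology

namespace Wasep

/-- Particle configurations on a segment of length `N`
(site `x` of the paper, `x ∈ {1,…,N}`, is index `x-1 : Fin N`). -/
abbrev Conf (N : ℕ) := Fin N → Bool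

/-- Number of particles of a configuration. -/
def numParticles {N : ℕ} (ξ : Conf N) : ℕ :=
  (Finset.univ.filter fun x => ξ x = true).card

/-- The left site of the bond `y` (the paper's site `y`, for `y ∈ {1,…,N-1}`). -/
def siteA {N : ℕ} (y : Fin (N - 1)) : Fin N := ⟨y.1, by have := y.isLt; omega⟩

/-- The right site of the bond `y` (the paper's site `y+1`, for `y ∈ {1,…,N-1}`). -/
def siteB {N : ℕ} (y : Fin (N - 1)) : Fin N := ⟨y.1 + 1, by have := y.isLt; omega⟩

/-- Jump rate of the bond `y` in configuration `ξ`: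
`q·1_{ξ(y)<ξ(y+1)} + p·1_{ξ(y)>ξ(y+1)}` with `q = 1-p`. -/
noncomputable def rate {N : ℕ} (p : ℝ) (ξ : Conf N) (y : Fin (N - 1)) : ℝ :=
  (if ξ (siteA y) = false ∧ ξ (siteB y) = true then 1 - p else 0) +
    (if ξ (siteA y) = true ∧ ξ (siteB y) = false then p else 0)

/-- The configuration `ξ^y`, with the contents of sites `y` and `y+1` swapped. -/
def swapBond {N : ℕ} (ξ : Conf N) (y : Fin (N - 1)) : Conf N :=
  ξ ∘ Equiv.swap (siteA y) (siteB y)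

/-- The ASEP generator acting on functions:
`(L f)(ξ) = Σ_{y=1}^{N-1} (q·1_{ξ(y)<ξ(y+1)} + p·1_{ξ(y)>ξ(y+1)})(f(ξ^y) − f(ξ))`. -/
noncomputable def gen (N : ℕ) (p : ℝ) (f : Conf N → ℝ) (ξ : Conf N) : ℝ :=
  ∑ y : Fin (N - 1), rate p ξ y * (f (swapBond ξ y) - f ξ)

/-- The ASEP generator, as a matrix:  `(L f)(ξ) = Σ_{ξ'} genM(ξ,ξ') f(ξ')`. -/
noncomputable def genM (N : ℕ) (p : ℝ) : Matrix (Conf N) (Conf N) ℝ := fun ξ ξ' =>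
  ∑ y : Fin (N - 1),
    rate p ξ y * ((if ξ' = swapBond ξ y then (1 : ℝ) else 0) - (if ξ' = ξ then (1 : ℝ) else 0))

/-- The semigroup `P_t = exp (t L)`; `Pt N p t ξ ξ'` is the transition
probability from `ξ` to `ξ'` in time `t`. -/
noncomputable def Pt (N : ℕ) (p t : ℝ) (ξ ξ' : Conf N) : ℝ :=
  (NormedSpace.exp (t • LinearMap.toContinuousLinearMap (Matrix.toLin' (genM N p))))
    (fun η => if η = ξ' then (1 : ℝ) else 0) ξ

/-- `λ = p / q`. -/
noncomputable def lam (p : ℝ) : ℝ := p / (1 - p)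

/-- The bias `b = p - q`. -/
def bias (p : ℝ) : ℝ := p - (1 - p)

/-- The increasing list of (1-based) particle positions `ξ_1 < ξ_2 < … < ξ_k`. -/
def particlePos {N : ℕ} (ξ : Conf N) : List ℕ :=
  ((Finset.univ.filter fun x => ξ x = true).sort (· ≤ ·)).map fun x => (x : ℕ) + 1

/-- `A(ξ) = Σ_{i=1}^k (N − k + i − ξ_i)`. -/
def Astat (N k : ℕ) {M : ℕ} (ξ : Conf M) : ℤ :=
  ∑ i ∈ Finset.range k, ((N : ℤ) - k + (i + 1) - ((particlePos ξ).getD i 0 : ℤ))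

/-- The partition function `Z_{N,k} = Σ_{ξ ∈ Ω⁰_{N,k}} λ^{−A(ξ)}`. -/
noncomputable def Zpart (N k : ℕ) (p : ℝ) : ℝ :=
  ∑ ξ ∈ Finset.univ.filter (fun ξ : Conf N => numParticles ξ = k), lam p ^ (-Astat N k ξ)

/-- The invariant measure `π_{N,k}(ξ) = λ^{−A(ξ)}/Z_{N,k}`,
extended by `0` outside of the `k`-particle sector. -/
noncomputable def statMeas (N k : ℕ) (p : ℝ) (ξ : Conf N) : ℝ :=
  if numParticles ξ = k then lam p ^ (-Astat N k ξ) / Zpart N k p else 0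

/-- Total variation distance `‖μ − ν‖_TV = sup_A (μ(A) − ν(A))` on a finite space. -/
noncomputable def tvDist {S : Type*} [Fintype S] (μ ν : S → ℝ) : ℝ :=
  ⨆ A : Finset S, (∑ x ∈ A, μ x - ∑ x ∈ A, ν x)

/-- `d^{N,k}(t) = max_{ξ ∈ Ω⁰_{N,k}} ‖P_t(ξ,·) − π_{N,k}‖_TV`. -/
noncomputable def distEq (N k : ℕ) (p t : ℝ) : ℝ :=
  ⨆ ξ : {ξ : Conf N // numParticles ξ = k},
    tvDist (fun ξ' => Pt N p t ξ.1 ξ') (statMeas N k p)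

/-- `T^{N,k}_mix(ε) = inf {t ≥ 0 : d^{N,k}(t) ≤ ε}`. -/
noncomputable def Tmix (N k : ℕ) (p ε : ℝ) : ℝ :=
  sInf {t : ℝ | 0 ≤ t ∧ distEq N k p t ≤ ε}

/-- The height function `h(ξ)(x) = Σ_{y=1}^x (2ξ(y) − 1)`, for `x ∈ {0,…,N}`. -/
def height {N : ℕ} (ξ : Conf N) (x : ℕ) : ℤ :=
  ∑ y ∈ Finset.univ.filter (fun y : Fin N => (y : ℕ) < x), (if ξ y then (1 : ℤ) else -1)

/-- Pointwise order on height functions. -/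
def heightLE {N : ℕ} (ξ ξ' : Conf N) : Prop := ∀ x ≤ N, height ξ x ≤ height ξ' x

/-- `ϱ = (√p − √q)²`. -/
noncomputable def rho (p : ℝ) : ℝ := (Real.sqrt p - Real.sqrt (1 - p)) ^ 2

/-- The spectral gap `gap_N = (√p − √q)² + 4√(pq)·sin²(π/(2N))`. -/
noncomputable def gapN (N : ℕ) (p : ℝ) : ℝ :=
  rho p + 4 * Real.sqrt (p * (1 - p)) * Real.sin (Real.pi / (2 * N)) ^ 2

/-- `a` solves the boundary value problem `√(pq)·Δa(x) = ϱ·a(x)` on `{1,…,N−1}`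
with `a(0) = 1` and `a(N) = λ^{(2k−N)/2}`, defining `a_{N,k}`. -/
def IsBVP (N k : ℕ) (p : ℝ) (a : ℕ → ℝ) : Prop :=
  a 0 = 1 ∧ a N = lam p ^ ((2 * (k : ℝ) - N) / 2) ∧
    ∀ x : ℕ, 1 ≤ x → x ≤ N - 1 →
      Real.sqrt (p * (1 - p)) * (a (x + 1) + a (x - 1) - 2 * a x) = rho p * a x

/-- `f^{(j)}_{N,k}(ζ) = Σ_{x=1}^{N-1} sin(jπx/N)·(λ^{ζ(x)/2} − a_{N,k}(x))/(λ−1)`,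
viewed as a function of the particle configuration via the height function. -/
noncomputable def eigenF (N : ℕ) (p : ℝ) (a : ℕ → ℝ) (j : ℕ) (ξ : Conf N) : ℝ :=
  ∑ x ∈ Finset.Icc 1 (N - 1),
    Real.sin ((j : ℝ) * Real.pi * x / N) *
      ((lam p ^ ((height ξ x : ℝ) / 2) - a x) / (lam p - 1))

/-- `f^{(0)}_{N,k}(ζ) = Σ_{x=1}^{N-1} (λ^{ζ(x)/2} − a_{N,k}(x))/(λ−1)`. -/
noncomputable def fZero (N : ℕ) (p : ℝ) (a : ℕ → ℝ) (ξ : Conf N) : ℝ :=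
  ∑ x ∈ Finset.Icc 1 (N - 1), (lam p ^ ((height ξ x : ℝ) / 2) - a x) / (lam p - 1)

/-- The maximal configuration `ξ^max` (particles on sites `1,…,k`);
its height function is `∧`. -/
def confMax (N k : ℕ) : Conf N := fun x => decide ((x : ℕ) < k)

/-- The minimal configuration `ξ^min` (particles on sites `N−k+1,…,N`);
its height function is `∨`. -/
def confMin (N k : ℕ) : Conf N := fun x => decide (N - k ≤ (x : ℕ))

/-- `π_{N,k}(ξ(x) = 1)` for the (0-based) site `x : Fin N`. -/
noncomputable def occProb (N k : ℕ) (p : ℝ) (x : Fin N) : ℝ :=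
  ∑ ξ ∈ Finset.univ.filter (fun ξ : Conf N => ξ x = true), statMeas N k p ξ

/-- `ℓ_N(ξ) = min {x ∈ {1,…,N} : ξ(x) = 1}`, the position of the leftmost particle. -/
noncomputable def leftPos {N : ℕ} (ξ : Conf N) : ℕ :=
  sInf {x | ∃ y : Fin N, ξ y = true ∧ x = (y : ℕ) + 1}

/-- `r_N(ξ) = max {x ∈ {1,…,N} : ξ(x) = 0}`, the position of the rightmost empty site. -/
noncomputable def rightEmpty {N : ℕ} (ξ : Conf N) : ℕ :=
  sSup {x | ∃ y : Fin N, ξ y = false ∧ x = (y : ℕ) + 1}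

/-- `Q₁(ξ)`: maximal length of a run of consecutive empty sites. -/
noncomputable def runEmpty {N : ℕ} (ξ : Conf N) : ℕ :=
  sSup {n | 1 ≤ n ∧ ∃ i, i + n ≤ N ∧
    ∀ y : Fin N, i ≤ (y : ℕ) → (y : ℕ) < i + n → ξ y = false}

/-- `Q₂(ξ)`: maximal length of a run of consecutive occupied sites. -/
noncomputable def runFull {N : ℕ} (ξ : Conf N) : ℕ :=
  sSup {n | 1 ≤ n ∧ ∃ i, i + n ≤ N ∧
    ∀ y : Fin N, i ≤ (y : ℕ) → (y : ℕ) < i + n → ξ y = true}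

/-- `Q(ξ) = max(Q₁(ξ), Q₂(ξ))`. -/
noncomputable def Qmax {N : ℕ} (ξ : Conf N) : ℕ := max (runEmpty ξ) (runFull ξ)

/-- `L_N(ζ) = max{x : ζ(x) = −x}` for a height function `ζ`. -/
noncomputable def LNh {N : ℕ} (ξ : Conf N) : ℕ :=
  sSup {x | x ≤ N ∧ height ξ x = -(x : ℤ)}

/-- `R_N(ζ) = min{x : ζ(x) = x − 2(N−k)}` for a height function `ζ`. -/
noncomputable def RNh (k : ℕ) {N : ℕ} (ξ : Conf N) : ℕ :=
  sInf {x | x ≤ N ∧ height ξ x = (x : ℤ) - 2 * ((N : ℤ) - k)}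

/-- `D_N(ζ) = max(|L_N(ζ) − (N−k)|, |R_N(ζ) − (N−k)|)`. -/
noncomputable def DNh (k : ℕ) {N : ℕ} (ξ : Conf N) : ℤ :=
  max |(LNh ξ : ℤ) - ((N : ℤ) - k)| |(RNh k ξ : ℤ) - ((N : ℤ) - k)|

/-- `H_ζ(x) = λ^{(N−k)/2}·(λ^{ζ(x)/2} − a_{N,k}(x))/(λ−1)`. -/
noncomputable def Hfun (N k : ℕ) (p : ℝ) (a : ℕ → ℝ) (ξ : Conf N) (x : ℕ) : ℝ :=
  lam p ^ (((N : ℝ) - k) / 2) * ((lam p ^ ((height ξ x : ℝ) / 2) - a x) / (lam p - 1))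

/-- Variance of `f` under the (probability vector) `μ`. -/
noncomputable def varOf {S : Type*} [Fintype S] (μ f : S → ℝ) : ℝ :=
  (∑ x, μ x * f x ^ 2) - (∑ x, μ x * f x) ^ 2

/-- Total variation distance between the pushforwards of `μ` and `ν` by `g`. -/
noncomputable def tvPush {S : Type*} [Fintype S] (μ ν : S → ℝ) (g : S → ℕ) : ℝ :=
  ⨆ A : Set ℕ,
    ((∑ x ∈ Finset.univ.filter (fun x => g x ∈ A), μ x) -
      ∑ x ∈ Finset.univ.filter (fun x => g x ∈ A), ν x)

/-- The scaling limit `ℓ_α(t)` of the (rescaled) position of the leftmost particle. -/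
noncomputable def ellAlpha (α t : ℝ) : ℝ :=
  if t ≤ α then 0
  else if (Real.sqrt α + Real.sqrt (1 - α)) ^ 2 ≤ t then 1 - α
  else (Real.sqrt t - Real.sqrt α) ^ 2

/-- The scaling limit `r_α(t)` of the (rescaled) position of the rightmost empty site. -/
noncomputable def rAlpha (α t : ℝ) : ℝ :=
  if t ≤ 1 - α then 1
  else if (Real.sqrt α + Real.sqrt (1 - α)) ^ 2 ≤ t then 1 - α
  else 1 - (Real.sqrt t - Real.sqrt (1 - α)) ^ 2

end Wasep

/-!
Both extremal height functions are explicit: `∧(x) - ∨(x) = 2 min(x, k, N - x)` and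
`∨ ≥ k - N`. In `f(∧) - f(∨)` the terms `a(x)` cancel, and Bernoulli's inequality gives
`λ^{∧(x)/2} - λ^{∨(x)/2} ≥ λ^{(k-N)/2} (λ - 1) min(x, k, N - x)`. It remains to bound
`∑ sin(πx/N) min(x, k, N - x)` from below by `Nk/8`, which Jordan's inequality does on the middle
half of the segment. The bound on the maximum is half the bound on the difference.
-/

namespace Wasep

open Real

@[simp]
lemma height_zero {N : ℕ} (ξ : Conf N) : height ξ 0 = 0 := by
  simp [height]

lemma height_succ {N : ℕ} (ξ : Conf N) {x : ℕ} (hx : x < N) :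
    height ξ (x + 1) = height ξ x + if ξ ⟨x, hx⟩ then 1 else -1 := by
  have hfilter : (Finset.univ.filter fun y : Fin N => (y : ℕ) < x + 1) =
      insert ⟨x, hx⟩ (Finset.univ.filter fun y : Fin N => (y : ℕ) < x) := by
    ext y
    simp only [Finset.mem_filter, Finset.mem_univ, true_and, Finset.mem_insert, Fin.ext_iff]
    omega
  rw [height, hfilter, Finset.sum_insert (by simp), add_comm]
  rfl

lemma height_confMax {N k x : ℕ} (hx : x ≤ N) :
    height (confMax N k) x = 2 * (min x k : ℕ) - x := by
  induction x with
  | zero => simp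
  | succ x ih =>
    rw [height_succ _ (by omega), ih (by omega)]
    by_cases h : x < k <;>
      simp only [confMax, h, decide_true, decide_false, Bool.false_eq_true, ↓reduceIte] <;> omega

lemma height_confMin {N k x : ℕ} (hx : x ≤ N) :
    height (confMin N k) x = x - 2 * (min x (N - k) : ℕ) := by
  induction x with
  | zero => simp
  | succ x ih =>
    rw [height_succ _ (by omega), ih (by omega)]
    by_cases h : N - k ≤ x <;>
      simp only [confMin, h, decide_true, decide_false, Bool.false_eq_true, ↓reduceIte] <;> omega

lemma eigenF_sub_eigenF (N : ℕ) (p : ℝ) (a : ℕ → ℝ) (j : ℕ) (ξ η : Conf N) :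
    eigenF N p a j ξ - eigenF N p a j η =
      ∑ x ∈ Finset.Icc 1 (N - 1), sin (j * π * x / N) *
        ((lam p ^ ((height ξ x : ℝ) / 2) - lam p ^ ((height η x : ℝ) / 2)) / (lam p - 1)) := by
  rw [eigenF, eigenF, ← Finset.sum_sub_distrib]
  congr 1 with x
  ring

lemma one_lt_lam {p : ℝ} (hp₀ : 1 / 2 < p) (hp₁ : p < 1) : 1 < lam p := by
  rw [lam, one_lt_div (by linarith)]
  linarith

lemma rpow_mul_mul_sub_one_le {L : ℝ} (hL : 1 < L) {e b : ℝ} (heb : e ≤ b) (m : ℕ) :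
    L ^ e * (m * (L - 1)) ≤ L ^ (b + m) - L ^ b := by
  have hBernoulli : 1 + m * (L - 1) ≤ L ^ m := one_add_mul_sub_le_pow (by linarith) m
  have hmono : L ^ e ≤ L ^ b := rpow_le_rpow_of_exponent_le hL.le heb
  rw [rpow_add (by linarith), rpow_natCast]
  calc L ^ e * (m * (L - 1)) ≤ L ^ b * (m * (L - 1)) := by gcongr
    _ ≤ L ^ b * L ^ m - L ^ b := by
      nlinarith [rpow_pos_of_pos (show 0 < L by linarith) b]

lemma rpow_mul_min_mul_sub_one_le {L : ℝ} (hL : 1 < L) {N k x : ℕ} (hk : 2 * k ≤ N)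
    (hx : x ≤ N) :
    L ^ (((k : ℝ) - N) / 2) * ((min x (min k (N - x)) : ℕ) * (L - 1)) ≤
      L ^ ((height (confMax N k) x : ℝ) / 2) - L ^ ((height (confMin N k) x : ℝ) / 2) := by
  have hmin : ((k : ℤ) - N) ≤ height (confMin N k) x := by
    rw [height_confMin hx]; omega
  have hdiff : height (confMax N k) x =
      height (confMin N k) x + 2 * (min x (min k (N - x)) : ℕ) := by
    rw [height_confMax hx, height_confMin hx]; omega
  generalize min x (min k (N - x)) = m at hdiff ⊢
  rw [hdiff, Int.cast_add, Int.cast_mul, Int.cast_two, Int.cast_natCast, add_div,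
    mul_div_cancel_left₀ _ two_ne_zero]
  exact rpow_mul_mul_sub_one_le hL
    (div_le_div_of_nonneg_right (by exact_mod_cast hmin) two_pos.le) m

lemma sin_pi_mul_div_nonneg {x N : ℕ} (hx : x ≤ N) : 0 ≤ sin (π * x / N) := by
  apply sin_nonneg_of_nonneg_of_le_pi (by positivity)
  rw [mul_div_assoc]
  exact mul_le_of_le_one_right pi_pos.le
    (div_le_one_of_le₀ (by exact_mod_cast hx) (by positivity))

lemma two_mul_min_le_sin_pi_mul {t : ℝ} (ht₀ : 0 ≤ t) (ht₁ : t ≤ 1) :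
    2 * min t (1 - t) ≤ sin (π * t) := by
  have jordan : ∀ s, 0 ≤ s → s ≤ 1 / 2 → 2 * s ≤ sin (π * s) := fun s hs₀ hs₁ => by
    have := mul_le_sin (x := π * s) (by positivity) (by nlinarith [pi_pos])
    rwa [← mul_assoc, div_mul_cancel₀ _ pi_ne_zero] at this
  rcases le_total t (1 / 2) with ht | ht
  · exact (mul_le_mul_of_nonneg_left (min_le_left _ _) zero_le_two).trans (jordan t ht₀ ht)
  · rw [← sin_pi_sub, ← mul_one_sub]
    exact (mul_le_mul_of_nonneg_left (min_le_right _ _) zero_le_two).trans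
      (jordan _ (by linarith) (by linarith))

-- On `[c, N - c]` with `c = ⌈N/4⌉` the sine is at least `2c/N` and `min x (min k (N - x))`
-- is at least `k/2`; this interval has `N + 1 - 2c ≥ N² / (8c)` points.
lemma le_sum_sin_mul_min {N k : ℕ} (hk : 1 ≤ k) (hkN : 2 * k ≤ N) :
    (N : ℝ) * k / 8 ≤ ∑ x ∈ Finset.Icc 1 (N - 1),
      sin (π * x / N) * ((min x (min k (N - x)) : ℕ) : ℝ) := by
  set c := (N + 3) / 4
  have hN : (0 : ℝ) < N := by exact_mod_cast (show 0 < N by omega)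
  have hterm : ∀ x ∈ Finset.Icc c (N - c),
      c * k / N ≤ sin (π * x / N) * ((min x (min k (N - x)) : ℕ) : ℝ) := by
    intro x hx
    rw [Finset.mem_Icc] at hx
    have hsin : 2 * c / N ≤ sin (π * x / N) := by
      have hxN : (x : ℝ) ≤ N := by exact_mod_cast (show x ≤ N by omega)
      have hcx : (c : ℝ) ≤ x := by exact_mod_cast hx.1
      have hcNx : (c : ℝ) + x ≤ N := by exact_mod_cast (show c + x ≤ N by omega)
      have hmin : (c : ℝ) / N ≤ min ((x : ℝ) / N) (1 - (x : ℝ) / N) := by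
        rw [le_min_iff, one_sub_div hN.ne']
        exact ⟨by gcongr, by gcongr; linarith⟩
      rw [mul_div_assoc, mul_div_assoc]
      exact (mul_le_mul_of_nonneg_left hmin zero_le_two).trans
        (two_mul_min_le_sin_pi_mul (by positivity) (div_le_one_of_le₀ hxN hN.le))
    have htent : (k : ℝ) / 2 ≤ ((min x (min k (N - x)) : ℕ) : ℝ) := by
      rw [div_le_iff₀ two_pos]; exact_mod_cast (show k ≤ _ * 2 by omega)
    calc (c : ℝ) * k / N = 2 * c / N * (k / 2) := by ring
      _ ≤ _ := mul_le_mul hsin htent (by positivity) (le_trans (by positivity) hsin)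
  have hcount : (N : ℝ) ^ 2 ≤ 8 * ((N + 1 - 2 * c : ℕ) * c) := by
    have : N ^ 2 ≤ 8 * ((N + 1 - 2 * c) * c) := by
      zify [(show 2 * c ≤ N + 1 by omega)]
      nlinarith [mul_nonneg (by omega : (0 : ℤ) ≤ 4 * c - N)
        (by omega : (0 : ℤ) ≤ N + 3 - 4 * c)]
    exact_mod_cast this
  calc (N : ℝ) * k / 8 ≤ (N + 1 - 2 * c : ℕ) * (c * k / N) := by
        rw [mul_div_assoc', div_le_div_iff₀ (by norm_num) hN]
        nlinarith [(Nat.one_le_cast.mpr hk : (1 : ℝ) ≤ k)]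
    _ = (Finset.Icc c (N - c)).card • (c * k / N : ℝ) := by
        rw [Nat.card_Icc, nsmul_eq_mul, show N - c + 1 - c = N + 1 - 2 * c by omega]
    _ ≤ ∑ x ∈ Finset.Icc c (N - c), sin (π * x / N) * ((min x (min k (N - x)) : ℕ) : ℝ) :=
        Finset.card_nsmul_le_sum _ _ _ hterm
    _ ≤ _ := by
        refine Finset.sum_le_sum_of_subset_of_nonneg
          (Finset.Icc_subset_Icc (by omega) (by omega)) fun x hx _ => ?_
        exact mul_nonneg (sin_pi_mul_div_nonneg ((Finset.mem_Icc.mp hx).2.trans (N.sub_le 1)))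
          (Nat.cast_nonneg _)

lemma rpow_mul_sum_sin_mul_min_le_eigenF_sub {p : ℝ} (hlam : 1 < lam p) {N k : ℕ}
    (hk : 2 * k ≤ N) (a : ℕ → ℝ) :
    lam p ^ (((k : ℝ) - N) / 2) * ∑ x ∈ Finset.Icc 1 (N - 1),
        sin (π * x / N) * ((min x (min k (N - x)) : ℕ) : ℝ) ≤
      eigenF N p a 1 (confMax N k) - eigenF N p a 1 (confMin N k) := by
  rw [eigenF_sub_eigenF, Finset.mul_sum]
  refine Finset.sum_le_sum fun x hx => ?_
  have hxN : x ≤ N := (Finset.mem_Icc.mp hx).2.trans (N.sub_le 1)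
  rw [Nat.cast_one, one_mul, mul_left_comm]
  refine mul_le_mul_of_nonneg_left ?_ (sin_pi_mul_div_nonneg hxN)
  rw [le_div_iff₀ (by linarith), mul_assoc]
  exact rpow_mul_min_mul_sub_one_le hlam hk hxN

theorem eigenfunction_extremal_bound_general
    (N k : ℕ) (p : ℝ) (hk : 1 ≤ k ∧ 2 * k ≤ N)
    (hp : p ∈ Set.Ioo (1 / 2 : ℝ) 1)
    (a : ℕ → ℝ) :
    1 / 8 * lam p ^ (((k : ℝ) - N) / 2) * N * k ≤
        eigenF N p a 1 (confMax N k) - eigenF N p a 1 (confMin N k) ∧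
      1 / 16 * lam p ^ (((k : ℝ) - N) / 2) * N * k ≤
        max (eigenF N p a 1 (confMax N k)) (-eigenF N p a 1 (confMin N k)) := by
  have hlam : 1 < lam p := one_lt_lam hp.1 hp.2
  have hgap : 1 / 8 * lam p ^ (((k : ℝ) - N) / 2) * N * k ≤
      eigenF N p a 1 (confMax N k) - eigenF N p a 1 (confMin N k) :=
    calc 1 / 8 * lam p ^ (((k : ℝ) - N) / 2) * N * k
        = lam p ^ (((k : ℝ) - N) / 2) * (N * k / 8) := by ring
      _ ≤ lam p ^ (((k : ℝ) - N) / 2) * ∑ x ∈ Finset.Icc 1 (N - 1),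
            sin (π * x / N) * ((min x (min k (N - x)) : ℕ) : ℝ) := by
        gcongr
        exact le_sum_sin_mul_min hk.1 hk.2
      _ ≤ _ := rpow_mul_sum_sin_mul_min_le_eigenF_sub hlam hk.2 a
  refine ⟨hgap, ?_⟩
  linarith [le_max_left (eigenF N p a 1 (confMax N k)) (-eigenF N p a 1 (confMin N k)),
    le_max_right (eigenF N p a 1 (confMax N k)) (-eigenF N p a 1 (confMin N k))]

/-- First-moment lower bound for the eigenfunction `f_{N,k}` at the extremal
configurations: `f(∧) − f(∨) ≥ (1/8)·λ^{(k−N)/2}·N·k`, hence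
`max(f(∧), −f(∨)) ≥ (1/16)·λ^{(k−N)/2}·N·k`. -/
theorem eigenfunction_extremal_bound
    (N k : ℕ) (p : ℝ) (hN : 2 ≤ N) (hk : 1 ≤ k ∧ 2 * k ≤ N)
    (hp : p ∈ Set.Ioo (1 / 2 : ℝ) 1)
    (a : ℕ → ℝ) (ha : IsBVP N k p a) :
    1 / 8 * lam p ^ (((k : ℝ) - N) / 2) * N * k ≤
        eigenF N p a 1 (confMax N k) - eigenF N p a 1 (confMin N k) ∧
      1 / 16 * lam p ^ (((k : ℝ) - N) / 2) * N * k ≤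
        max (eigenF N p a 1 (confMax N k)) (-eigenF N p a 1 (confMin N k)) :=
  eigenfunction_extremal_bound_general N k p hk hp a

end Wasep
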